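/- arXiv:1610.08824 — 2 statements merged into one kernel-verified Lean document; each statement's English description precedes it below -/
import Mathlib

section
/- Let U be continuous in time, η = U − PU, and let P̂ be the interpolation operator additionally using the left endpoint t_{m−1}. Then for every m ∈ {1,…,M} and every ψ ∈ 𝒰^τ: Q_m,ρ[∂ₜM₀η, ψ] + ⟨M₀[η]_{m−1}^0, ψ(t_{m−1}+)⟩_H = Q_m,ρ[∂ₜM₀(U − P̂U), ψ] + R(U,ψ), where the remainder satisfies |R(U,ψ)| ≤ C α τ_m |M₀(PU − U)(t_{m−1}+)|_H² + β ⦀ψ⦀²_{Q,ρ,m} for all α, β > 0 with αβ = 1/4, with a constant C ≥ 0 depending only on the final time T and on ρ. -/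
/-!
On `I_m = (a, b]` let `Ω` be the nodal polynomial of the Radau nodes. `P̂U - PU` has degree
`q + 1` and vanishes at the nodes, so it is `Ω • u` with `Ω(a) u = (U - PU)(a)`, which is also
the jump because `t_{m-1}` is the last node of `I_{m-1}`. Exactness of the quadrature in degree
`2q` and an integration by parts against the weight `w = e^{-2ρ(s-a)}` turn
`Q[Ω' ⟪M₀u, ψ⟫] + Ω(a) ⟪M₀u, ψ(a)⟫` into `R = 2ρ ∫ Ω ⟪M₀u, ψ⟫ w`. Cauchy–Schwarz, exactness
for `⟪M₀u, ψ⟫²` and the estimate `∫ Ω² w ≤ τ/2 Ω(a)²` give `R² ≤ 2ρ²τ ‖M₀η(a)‖² ⦀ψ⦀²`, and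
Young's inequality with `αβ = 1/4` yields the claim with `C = 2ρ²`.
-/

open MeasureTheory Real
open scoped RealInnerProductSpace

/-- `f` is an `H`-valued polynomial of degree at most `q`. -/
def IsPolyDeg {H : Type*} [NormedAddCommGroup H] [InnerProductSpace ℝ H]
    (q : ℕ) (f : ℝ → H) : Prop :=
  ∃ c : Fin (q + 1) → H, ∀ s : ℝ, f s = ∑ i : Fin (q + 1), s ^ (i : ℕ) • c i

/-- A right-sided Gauß–Radau quadrature with `q+1` nodes on the interval `(a,b]` with
weighting function `w`: nodes `a < node₀ < ⋯ < node_q = b`, positive weights, exact for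
polynomials of degree at most `2q`. -/
def IsGaussRadauOn (q : ℕ) (w : ℝ → ℝ) (a b : ℝ) (node wt : Fin (q + 1) → ℝ) : Prop :=
  StrictMono node ∧ (∀ i, node i ∈ Set.Ioc a b) ∧ node (Fin.last q) = b ∧
    (∀ i, 0 < wt i) ∧
    ∀ p : Polynomial ℝ, p.natDegree ≤ 2 * q →
      ∫ s in Set.Ioo a b, p.eval s * w s = ∑ i, wt i * p.eval (node i)

open Polynomial Finset Lagrange

theorem abs_le_add_of_sq_le_four_mul {r x y : ℝ} (hx : 0 ≤ x) (hy : 0 ≤ y)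
    (h : r ^ 2 ≤ 4 * x * y) : |r| ≤ x + y :=
  abs_le_of_sq_le_sq (by nlinarith [sq_nonneg (x - y)]) (add_nonneg hx hy)

theorem sq_integral_mul_mul_le {α : Type*} [MeasurableSpace α] {μ : Measure α}
    {f g w : α → ℝ} (hw : 0 ≤ᵐ[μ] w) (hf : Integrable (fun s => f s ^ 2 * w s) μ)
    (hg : Integrable (fun s => g s ^ 2 * w s) μ)
    (hfg : Integrable (fun s => f s * g s * w s) μ) :
    (∫ s, f s * g s * w s ∂μ) ^ 2 ≤ (∫ s, f s ^ 2 * w s ∂μ) * ∫ s, g s ^ 2 * w s ∂μ := by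
  have hquad : ∀ t : ℝ, 0 ≤ (∫ s, f s ^ 2 * w s ∂μ) * (t * t)
      + (2 * ∫ s, f s * g s * w s ∂μ) * t + ∫ s, g s ^ 2 * w s ∂μ := by
    intro t
    have hexpand : (fun s => (t * f s + g s) ^ 2 * w s) = fun s =>
        t * t * (f s ^ 2 * w s) + (2 * t * (f s * g s * w s) + g s ^ 2 * w s) := by
      funext s; ring
    have hnonneg := integral_nonneg_of_ae (μ := μ) (f := fun s => (t * f s + g s) ^ 2 * w s)
      (hw.mono fun s hs => mul_nonneg (sq_nonneg _) hs)
    have hrest : Integrable (fun s => 2 * t * (f s * g s * w s) + g s ^ 2 * w s) μ :=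
      (hfg.const_mul _).add hg
    rw [hexpand, integral_add (hf.const_mul _) hrest, integral_add (hfg.const_mul _) hg,
      integral_const_mul, integral_const_mul] at hnonneg
    linarith
  have := discrim_le_zero hquad
  rw [discrim] at this
  nlinarith

theorem Polynomial.integrableOn_eval_mul {w : ℝ → ℝ} (hw : Continuous w) (P : ℝ[X])
    (a b : ℝ) : IntegrableOn (fun s => P.eval s * w s) (Set.Ioo a b) :=
  ((P.continuous.mul hw).integrableOn_Icc).mono_set Set.Ioo_subset_Icc_self

section IsPolyDeg

variable {H : Type*} [NormedAddCommGroup H] [InnerProductSpace ℝ H] {n : ℕ} {f g : ℝ → H}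

theorem IsPolyDeg.exists_inner_eq (hf : IsPolyDeg n f) (z : H) :
    ∃ Φ : ℝ[X], Φ.natDegree ≤ n ∧ ∀ s, Φ.eval s = ⟪z, f s⟫ := by
  obtain ⟨c, hc⟩ := hf
  refine ⟨∑ i : Fin (n + 1), C ⟪z, c i⟫ * X ^ (i : ℕ),
    natDegree_sum_le_of_forall_le _ _ fun i _ => ?_, fun s => ?_⟩
  · exact (natDegree_C_mul_X_pow_le _ _).trans (Nat.lt_succ_iff.mp i.2)
  · simp only [hc, inner_sum, real_inner_smul_right, eval_finsetSum, eval_mul, eval_C,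
      eval_pow, eval_X]
    exact sum_congr rfl fun i _ => mul_comm _ _

theorem IsPolyDeg.eq_zero_of_eval_eq_zero (hf : IsPolyDeg n f) {y : Fin (n + 1) → ℝ}
    (hy : Function.Injective y) (hz : ∀ j, f (y j) = 0) (s : ℝ) : f s = 0 := by
  obtain ⟨Φ, hΦ, hΦf⟩ := hf.exists_inner_eq (f s)
  have hΦ0 : Φ = 0 := eq_zero_of_natDegree_lt_card_of_eval_eq_zero Φ hy
    (fun j => by rw [hΦf, hz, inner_zero_right]) (by simpa using Nat.lt_succ_of_le hΦ)
  simpa [hΦ0] using (hΦf s).symm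

theorem IsPolyDeg.sub (hf : IsPolyDeg n f) (hg : IsPolyDeg n g) :
    IsPolyDeg n fun s => f s - g s := by
  obtain ⟨c, hc⟩ := hf
  obtain ⟨d, hd⟩ := hg
  exact ⟨c - d, fun s => by simp [hc, hd, smul_sub]⟩

theorem IsPolyDeg.succ (hf : IsPolyDeg n f) : IsPolyDeg (n + 1) f := by
  obtain ⟨c, hc⟩ := hf
  exact ⟨Fin.snoc c 0, fun s => by simp [Fin.sum_univ_castSucc, hc]⟩

theorem IsPolyDeg.differentiable (hf : IsPolyDeg n f) : Differentiable ℝ f := by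
  obtain ⟨c, hc⟩ := hf
  rw [funext hc]
  fun_prop

theorem Polynomial.isPolyDeg_eval_smul {P : ℝ[X]} (hP : P.natDegree ≤ n) (u : H) :
    IsPolyDeg n fun s => P.eval s • u := by
  refine ⟨fun i => P.coeff i • u, fun s => ?_⟩
  show P.eval s • u = _
  rw [eval_eq_sum_range' (Nat.lt_succ_of_le hP), sum_smul,
    ← Fin.sum_univ_eq_sum_range (fun i => (P.coeff i * s ^ i) • u)]
  simp only [smul_smul, mul_comm]

theorem IsPolyDeg.eq_eval_nodal_smul {x : Fin n → ℝ} (hf : IsPolyDeg n f)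
    (hx : Function.Injective x) (hz : ∀ i, f (x i) = 0) {a : ℝ} (ha : ∀ i, a ≠ x i)
    (s : ℝ) : f s = (nodal univ x).eval s • ((nodal univ x).eval a)⁻¹ • f a := by
  have hΩa : (nodal univ x).eval a ≠ 0 := eval_nodal_not_at_node fun i _ => ha i
  have hdiff := hf.sub (isPolyDeg_eval_smul (by simp : (nodal univ x).natDegree ≤ n)
    (((nodal univ x).eval a)⁻¹ • f a))
  rw [← sub_eq_zero]
  refine hdiff.eq_zero_of_eval_eq_zero (y := Fin.cons a x)
    (Fin.cons_injective_of_injective (by simpa [eq_comm] using ha) hx) (fun j => ?_) s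
  cases j using Fin.cases with
  | zero => simp [smul_inv_smul₀ hΩa]
  | succ i => simp [hz, eval_nodal_at_node]

end IsPolyDeg

namespace IsGaussRadauOn

variable {q : ℕ} {w : ℝ → ℝ} {a b : ℝ} {x wt : Fin (q + 1) → ℝ}

theorem left_lt_node (h : IsGaussRadauOn q w a b x wt) (i : Fin (q + 1)) : a < x i :=
  (h.2.1 i).1

theorem left_lt_right (h : IsGaussRadauOn q w a b x wt) : a < b :=
  (h.left_lt_node 0).trans_le (h.2.1 0).2

theorem node_last (h : IsGaussRadauOn q w a b x wt) : x (Fin.last q) = b :=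
  h.2.2.1

theorem weight_pos (h : IsGaussRadauOn q w a b x wt) (i : Fin (q + 1)) : 0 < wt i :=
  h.2.2.2.1 i

theorem eval_nodal_right (h : IsGaussRadauOn q w a b x wt) : (nodal univ x).eval b = 0 := by
  rw [← h.node_last]
  exact eval_nodal_at_node (mem_univ _)

theorem integral_eq_sum (h : IsGaussRadauOn q w a b x wt) {p : ℝ[X]}
    (hp : p.natDegree ≤ 2 * q) :
    ∫ s in Set.Ioo a b, p.eval s * w s = ∑ i, wt i * p.eval (x i) :=
  h.2.2.2.2 p hp

theorem integral_nodal_mul_eq_zero (h : IsGaussRadauOn q w a b x wt) {r : ℝ[X]}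
    (hr : r.degree < q) :
    ∫ s in Set.Ioo a b, (nodal univ x * r).eval s * w s = 0 := by
  rcases eq_or_ne r 0 with rfl | hr0
  · simp
  have hdeg : (nodal univ x * r).natDegree ≤ 2 * q := by
    have := (natDegree_lt_iff_degree_lt hr0).mpr hr
    refine natDegree_mul_le.trans ?_
    simp only [natDegree_nodal, card_univ, Fintype.card_fin]
    omega
  rw [h.integral_eq_sum hdeg]
  simp [eval_nodal_at_node]

theorem integral_nodal_mul_eq_coeff_mul (h : IsGaussRadauOn q w a b x wt) (hw : Continuous w)
    {f : ℝ[X]} (hf : f.natDegree ≤ q) :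
    ∫ s in Set.Ioo a b, (nodal univ x * f).eval s * w s = f.coeff q *
      ∫ s in Set.Ioo a b, (nodal univ x * nodal (univ.erase (Fin.last q)) x).eval s * w s := by
  set Ω := nodal univ x
  set p := nodal (univ.erase (Fin.last q)) x
  have hp : p.natDegree = q := by simp [p]
  have hr : (f - C (f.coeff q) * p).degree < q := by
    rw [degree_lt_iff_coeff_zero]
    intro m hm
    rcases hm.eq_or_lt with rfl | hlt
    · rw [coeff_sub, coeff_C_mul, ← hp, (nodal_monic : p.Monic).coeff_natDegree, mul_one,
        sub_self]
    · rw [coeff_sub, coeff_C_mul, coeff_eq_zero_of_natDegree_lt (hf.trans_lt hlt),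
        coeff_eq_zero_of_natDegree_lt (p := p) (hp ▸ hlt), mul_zero, sub_zero]
  have hzero : ∫ s in Set.Ioo a b, (Ω * (f - C (f.coeff q) * p)).eval s * w s = 0 :=
    h.integral_nodal_mul_eq_zero hr
  have hsplit : ∀ s, (Ω * (f - C (f.coeff q) * p)).eval s * w s
      = (Ω * f).eval s * w s - f.coeff q * ((Ω * p).eval s * w s) := fun s => by
    simp only [eval_mul, eval_sub, eval_C]
    ring
  simp_rw [hsplit] at hzero
  rwa [integral_sub ((Ω * f).integrableOn_eval_mul hw a b)
    (((Ω * p).integrableOn_eval_mul hw a b).const_mul _), integral_const_mul,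
    sub_eq_zero] at hzero

theorem integral_sq_eq_sum (h : IsGaussRadauOn q w a b x wt) {Φ : ℝ[X]}
    (hΦ : Φ.natDegree ≤ q) :
    ∫ s in Set.Ioo a b, Φ.eval s ^ 2 * w s = ∑ i, wt i * Φ.eval (x i) ^ 2 := by
  simpa only [eval_pow] using h.integral_eq_sum (p := Φ ^ 2)
    (natDegree_pow_le.trans (by omega))

end IsGaussRadauOn

theorem Polynomial.integral_eval_derivative_mul_exp {ρ a b : ℝ} (hab : a ≤ b) {P : ℝ[X]}
    (hPb : P.eval b = 0) :
    ∫ s in Set.Ioo a b, P.derivative.eval s * exp (-2 * ρ * (s - a))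
      = -P.eval a + 2 * ρ * ∫ s in Set.Ioo a b, P.eval s * exp (-2 * ρ * (s - a)) := by
  have hw : Continuous fun s => exp (-2 * ρ * (s - a)) := by fun_prop
  have hF : ∀ s, HasDerivAt (fun s => P.eval s * exp (-2 * ρ * (s - a)))
      (P.derivative.eval s * exp (-2 * ρ * (s - a))
        - 2 * ρ * (P.eval s * exp (-2 * ρ * (s - a)))) s := fun s => by
    have hexp : HasDerivAt (fun s => -2 * ρ * (s - a)) (-2 * ρ) s := by
      simpa using ((hasDerivAt_id s).sub_const a).const_mul (-2 * ρ)
    exact ((P.hasDerivAt s).mul hexp.exp).congr_deriv (by ring)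
  have hFTC := intervalIntegral.integral_eq_sub_of_hasDerivAt (fun s _ => hF s)
    (((P.derivative.continuous.mul hw).sub
      (continuous_const.mul (P.continuous.mul hw))).intervalIntegrable a b)
  rw [intervalIntegral.integral_of_le hab, integral_Ioc_eq_integral_Ioo,
    integral_sub (P.derivative.integrableOn_eval_mul hw a b)
      ((P.integrableOn_eval_mul hw a b).const_mul _), integral_const_mul] at hFTC
  simp only [hPb, zero_mul, sub_self, mul_zero, exp_zero, mul_one] at hFTC
  linarith

namespace IsGaussRadauOn

variable {q : ℕ} {ρ a b : ℝ} {x wt : Fin (q + 1) → ℝ}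

theorem sum_mul_eval_derivative_nodal_mul
    (h : IsGaussRadauOn q (fun s => exp (-2 * ρ * (s - a))) a b x wt) {Φ : ℝ[X]}
    (hΦ : Φ.natDegree ≤ q) :
    ∑ i, wt i * ((nodal univ x).derivative.eval (x i) * Φ.eval (x i))
      = -((nodal univ x).eval a * Φ.eval a) + 2 * ρ *
        ∫ s in Set.Ioo a b, (nodal univ x).eval s * Φ.eval s * exp (-2 * ρ * (s - a)) := by
  set Ω := nodal univ x
  have hw : Continuous fun s => exp (-2 * ρ * (s - a)) := by fun_prop
  have hΩ : Ω.natDegree = q + 1 := by simp [Ω]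
  have hexact := h.integral_eq_sum (p := Ω.derivative * Φ) (natDegree_mul_le.trans
    (by have := natDegree_derivative_le Ω; omega))
  have hvanish : ∫ s in Set.Ioo a b, (Ω * Φ.derivative).eval s * exp (-2 * ρ * (s - a)) = 0 := by
    refine h.integral_nodal_mul_eq_zero ?_
    rcases eq_or_ne Φ 0 with rfl | hΦ0
    · simp
    · exact (degree_derivative_lt hΦ0).trans_le (degree_le_of_natDegree_le hΦ)
  have hIBP := integral_eval_derivative_mul_exp (ρ := ρ) h.left_lt_right.le
    (P := Ω * Φ) (by rw [eval_mul, h.eval_nodal_right, zero_mul])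
  simp only [derivative_mul, eval_add, add_mul] at hIBP
  rw [integral_add ((Ω.derivative * Φ).integrableOn_eval_mul hw a b)
    ((Ω * Φ.derivative).integrableOn_eval_mul hw a b), hvanish, add_zero, hexact] at hIBP
  simpa only [eval_mul] using hIBP

/-- Integrating `(Ω²)'` by parts gives `Ω(a)² = 2ρ ∫ Ω² w - 2(q+1) ∫ Ω p w` with `Ω = (X - b) p`
(only the leading coefficient of `Ω'` survives against `Ω`), and `(b - a) ∫ Ω p w ≤ -∫ Ω² w`
because `(b - s)(s - a) ≥ 0` on the interval. -/
theorem integral_eval_nodal_sq_le (hρ : 0 ≤ ρ)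
    (h : IsGaussRadauOn q (fun s => exp (-2 * ρ * (s - a))) a b x wt) :
    ∫ s in Set.Ioo a b, (nodal univ x).eval s ^ 2 * exp (-2 * ρ * (s - a))
      ≤ (b - a) / 2 * (nodal univ x).eval a ^ 2 := by
  set Ω := nodal univ x
  set p := nodal (univ.erase (Fin.last q)) x
  set A := ∫ s in Set.Ioo a b, Ω.eval s ^ 2 * exp (-2 * ρ * (s - a))
  set E := ∫ s in Set.Ioo a b, (Ω * p).eval s * exp (-2 * ρ * (s - a))
  have hw : Continuous fun s => exp (-2 * ρ * (s - a)) := by fun_prop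
  have hab := h.left_lt_right
  have hΩ : Ω.natDegree = q + 1 := by simp [Ω]
  have hΩp : Ω = (X - C b) * p := by
    rw [← h.node_last]
    exact nodal_eq_mul_nodal_erase (mem_univ _)
  have hmoment : ∫ s in Set.Ioo a b, (Ω * Ω.derivative).eval s * exp (-2 * ρ * (s - a))
      = (q + 1) * E := by
    have hlead : Ω.coeff (q + 1) = 1 := hΩ ▸ (nodal_monic : Ω.Monic).coeff_natDegree
    rw [h.integral_nodal_mul_eq_coeff_mul hw
      ((natDegree_derivative_le Ω).trans (by omega)), coeff_derivative, hlead, one_mul]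
  have hIBP := integral_eval_derivative_mul_exp (ρ := ρ) hab.le
    (P := Ω ^ 2) (by rw [eval_pow, h.eval_nodal_right, zero_pow two_ne_zero])
  have hsq : ∀ s, (Ω ^ 2).derivative.eval s * exp (-2 * ρ * (s - a))
      = 2 * ((Ω * Ω.derivative).eval s * exp (-2 * ρ * (s - a))) := fun s => by
    simp only [derivative_sq, eval_mul, eval_C]
    ring
  simp only [hsq, integral_const_mul, hmoment, eval_pow] at hIBP
  have hE : (b - a) * E ≤ -A := by
    have hΩ2 : IntegrableOn (fun s => Ω.eval s ^ 2 * exp (-2 * ρ * (s - a))) (Set.Ioo a b) := by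
      have := (Ω ^ 2).integrableOn_eval_mul hw a b
      simp only [eval_pow] at this
      exact this
    rw [← integral_const_mul, ← integral_neg]
    refine setIntegral_mono_on (((Ω * p).integrableOn_eval_mul hw a b).const_mul _)
      hΩ2.fun_neg measurableSet_Ioo fun s hs => ?_
    have hpos : 0 ≤ p.eval s ^ 2 * exp (-2 * ρ * (s - a)) * ((b - s) * (s - a)) :=
      mul_nonneg (by positivity) (mul_nonneg (by linarith [hs.2]) (by linarith [hs.1]))
    simp only [hΩp, eval_mul, eval_sub, eval_X, eval_C]
    nlinarith
  have hA : 0 ≤ A := setIntegral_nonneg measurableSet_Ioo fun s _ => by positivity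
  have hqE : (b - a) * (q * E) ≤ 0 :=
    mul_nonpos_of_nonneg_of_nonpos (by linarith)
      (mul_nonpos_of_nonneg_of_nonpos q.cast_nonneg (by nlinarith))
  nlinarith [mul_nonneg (sub_nonneg.mpr hab.le) (mul_nonneg hρ hA)]

variable {H : Type*} [NormedAddCommGroup H] [InnerProductSpace ℝ H]

theorem sum_inner_deriv_add_inner_left_eq
    (h : IsGaussRadauOn q (fun s => exp (-2 * ρ * (s - a))) a b x wt) (L : H →L[ℝ] H)
    {U p ph ψ : ℝ → H} (hU : Differentiable ℝ U) (hp : IsPolyDeg q p)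
    (hpU : ∀ i, p (x i) = U (x i)) (hph : IsPolyDeg (q + 1) ph)
    (hphU : ∀ i, ph (x i) = U (x i)) (hpha : ph a = U a) (hψ : IsPolyDeg q ψ) :
    (∑ i, wt i * ⟪deriv (fun s => L (U s) - L (p s)) (x i), ψ (x i)⟫) + ⟪L (U a - p a), ψ a⟫
      = (∑ i, wt i * ⟪deriv (fun s => L (U s) - L (ph s)) (x i), ψ (x i)⟫)
        + 2 * ρ * ∫ s in Set.Ioo a b, (nodal univ x).eval s *
            ⟪L (((nodal univ x).eval a)⁻¹ • (U a - p a)), ψ s⟫ * exp (-2 * ρ * (s - a)) := by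
  set Ω := nodal univ x
  set u := (Ω.eval a)⁻¹ • (U a - p a)
  have hΩa : Ω.eval a ≠ 0 := eval_nodal_not_at_node fun i _ => (h.left_lt_node i).ne
  have hfac : ∀ s, ph s - p s = Ω.eval s • u := fun s => by
    simpa [hpha] using (hph.sub hp.succ).eq_eval_nodal_smul h.1.injective
      (fun i => by rw [hphU, hpU, sub_self]) (fun i => (h.left_lt_node i).ne) s
  have hderiv : ∀ i, deriv (fun s => L (U s) - L (p s)) (x i)
      = deriv (fun s => L (U s) - L (ph s)) (x i) + Ω.derivative.eval (x i) • L u := by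
    intro i
    have hsplit : (fun s => L (U s) - L (p s))
        = fun s => (L (U s) - L (ph s)) + Ω.eval s • L u := by
      funext s
      rw [← map_smul, ← hfac s, map_sub]
      abel
    have hΩu := (Ω.hasDerivAt (x i)).smul_const (L u)
    rw [hsplit, deriv_fun_add _ hΩu.differentiableAt, hΩu.deriv]
    exact ((L.differentiable.comp hU).sub (L.differentiable.comp hph.differentiable)) _
  obtain ⟨Φ, hΦ, hΦψ⟩ := hψ.exists_inner_eq (L u)
  have hleft : ⟪L (U a - p a), ψ a⟫ = Ω.eval a * Φ.eval a := by
    rw [hΦψ, ← real_inner_smul_left, ← map_smul, smul_inv_smul₀ hΩa]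
  have hquad : ∑ i, wt i * (Ω.derivative.eval (x i) * Φ.eval (x i))
      = -(Ω.eval a * Φ.eval a) + 2 * ρ *
        ∫ s in Set.Ioo a b, Ω.eval s * Φ.eval s * exp (-2 * ρ * (s - a)) :=
    h.sum_mul_eval_derivative_nodal_mul hΦ
  simp only [hderiv, inner_add_left, real_inner_smul_left, ← hΦψ, mul_add, sum_add_distrib,
    hleft]
  simp only [mul_assoc] at hquad ⊢
  linear_combination hquad

theorem abs_two_mul_integral_eval_nodal_mul_inner_le (hρ : 0 ≤ ρ)
    (h : IsGaussRadauOn q (fun s => exp (-2 * ρ * (s - a))) a b x wt) (z : H) {ψ : ℝ → H}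
    (hψ : IsPolyDeg q ψ) {α β : ℝ} (hα : 0 < α) (hβ : 0 < β) (hαβ : α * β = 1 / 4) :
    |2 * ρ * ∫ s in Set.Ioo a b, (nodal univ x).eval s * ⟪z, ψ s⟫ * exp (-2 * ρ * (s - a))|
      ≤ 2 * ρ ^ 2 * α * (b - a) * ‖(nodal univ x).eval a • z‖ ^ 2
        + β * ∑ i, wt i * ⟪ψ (x i), ψ (x i)⟫ := by
  set Ω := nodal univ x
  have hw : Continuous fun s => exp (-2 * ρ * (s - a)) := by fun_prop
  obtain ⟨Φ, hΦ, hΦψ⟩ := hψ.exists_inner_eq z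
  simp only [← hΦψ]
  have hab := h.left_lt_right
  have hint : ∀ P : ℝ[X], Integrable (fun s => P.eval s * exp (-2 * ρ * (s - a)))
      (volume.restrict (Set.Ioo a b)) := fun P => P.integrableOn_eval_mul hw a b
  have hΩΦ := sq_integral_mul_mul_le (μ := volume.restrict (Set.Ioo a b))
    (f := fun s => Ω.eval s) (g := fun s => Φ.eval s)
    (Filter.Eventually.of_forall fun s => (exp_pos (-2 * ρ * (s - a))).le)
    (by have hΩ2 := hint (Ω ^ 2); simp only [eval_pow] at hΩ2; exact hΩ2)
    (by have hΦ2 := hint (Φ ^ 2); simp only [eval_pow] at hΦ2; exact hΦ2)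
    (by simpa only [eval_mul] using hint (Ω * Φ))
  have hA := h.integral_eval_nodal_sq_le hρ
  have hB := h.integral_sq_eq_sum hΦ
  set A := ∫ s in Set.Ioo a b, Ω.eval s ^ 2 * exp (-2 * ρ * (s - a))
  set B := ∫ s in Set.Ioo a b, Φ.eval s ^ 2 * exp (-2 * ρ * (s - a))
  set S := ∑ i, wt i * ⟪ψ (x i), ψ (x i)⟫
  have hS : 0 ≤ S := sum_nonneg fun i _ => mul_nonneg (h.weight_pos i).le real_inner_self_nonneg
  have hBS : B ≤ ‖z‖ ^ 2 * S := by
    rw [hB, mul_sum]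
    refine sum_le_sum fun i _ => ?_
    have hCS : Φ.eval (x i) ^ 2 ≤ ‖z‖ ^ 2 * ⟪ψ (x i), ψ (x i)⟫ := by
      rw [hΦψ, real_inner_self_eq_norm_sq, ← mul_pow, sq_le_sq,
        abs_of_nonneg (a := ‖z‖ * ‖ψ (x i)‖) (by positivity)]
      exact abs_real_inner_le_norm _ _
    nlinarith [(h.weight_pos i).le]
  have hB0 : 0 ≤ B := setIntegral_nonneg measurableSet_Ioo fun s _ => by positivity
  refine abs_le_add_of_sq_le_four_mul
    (mul_nonneg (by have := sub_pos.mpr hab; positivity) (sq_nonneg _))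
    (mul_nonneg hβ.le hS) ?_
  calc (2 * ρ * ∫ s in Set.Ioo a b, Ω.eval s * Φ.eval s * exp (-2 * ρ * (s - a))) ^ 2
      ≤ 4 * ρ ^ 2 * (A * B) := by rw [mul_pow]; nlinarith
    _ ≤ 4 * ρ ^ 2 * ((b - a) / 2 * Ω.eval a ^ 2 * (‖z‖ ^ 2 * S)) := by gcongr
    _ = 4 * (2 * ρ ^ 2 * α * (b - a) * ‖Ω.eval a • z‖ ^ 2) * (β * S) := by
      rw [norm_smul, Real.norm_eq_abs, mul_pow, sq_abs]
      linear_combination (-8 * ρ ^ 2 * (b - a) * Ω.eval a ^ 2 * ‖z‖ ^ 2 * S) * hαβ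

end IsGaussRadauOn

theorem stmt_3_general {H : Type*} [NormedAddCommGroup H] [InnerProductSpace ℝ H]
    (ρ T : ℝ) (hρ : 0 < ρ) :
    ∃ C : ℝ, 0 ≤ C ∧
      ∀ (M₀ : H →L[ℝ] H), (∀ x y : H, ⟪M₀ x, y⟫ = ⟪x, M₀ y⟫) →
      ∀ (q N : ℕ), 1 ≤ N →
      ∀ (t : ℕ → ℝ), t 0 = 0 → t N = T → (∀ m, m < N → t m < t (m + 1)) →
      ∀ (node wt : ℕ → Fin (q + 1) → ℝ),
        (∀ m, 1 ≤ m → m ≤ N →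
          IsGaussRadauOn q (fun s => Real.exp (-2 * ρ * (s - t (m - 1)))) (t (m - 1))
            (t m) (node m) (wt m)) →
      ∀ (U : ℝ → H), Continuous U → Differentiable ℝ U →
      ∀ (Pu : ℕ → ℝ → H),
        (∀ m, 1 ≤ m → m ≤ N → IsPolyDeg q (Pu m) ∧
          ∀ i, Pu m (node m i) = U (node m i)) →
      ∀ (Phu : ℕ → ℝ → H),
        (∀ m, 1 ≤ m → m ≤ N → IsPolyDeg (q + 1) (Phu m) ∧
          (∀ i, Phu m (node m i) = U (node m i)) ∧ Phu m (t (m - 1)) = U (t (m - 1))) →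
      ∀ m, 1 ≤ m → m ≤ N → ∀ ψ : ℝ → H, IsPolyDeg q ψ →
      ∃ R : ℝ,
        ((∑ i, wt m i *
              ⟪deriv (fun s => M₀ (U s) - M₀ (Pu m s)) (node m i), ψ (node m i)⟫)
            + ⟪M₀ ((U (t (m - 1)) - Pu m (t (m - 1))) -
                (if m = 1 then 0 else U (t (m - 1)) - Pu (m - 1) (t (m - 1)))),
                ψ (t (m - 1))⟫
          = (∑ i, wt m i *
              ⟪deriv (fun s => M₀ (U s) - M₀ (Phu m s)) (node m i), ψ (node m i)⟫) + R) ∧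
        ∀ α β : ℝ, 0 < α → 0 < β → α * β = 1 / 4 →
          |R| ≤ C * α * (t m - t (m - 1)) * ‖M₀ (U (t (m - 1)) - Pu m (t (m - 1)))‖ ^ 2
            + β * (∑ i, wt m i * ⟪ψ (node m i), ψ (node m i)⟫) := by
  refine ⟨2 * ρ ^ 2, by positivity, ?_⟩
  intro M₀ _ q N _ t _ _ _ node wt hGR U _ hU Pu hPu Phu hPhu m hm1 hmN ψ hψ
  have h := hGR m hm1 hmN
  obtain ⟨hPq, hPnode⟩ := hPu m hm1 hmN
  obtain ⟨hPhq, hPhnode, hPhleft⟩ := hPhu m hm1 hmN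
  -- `t (m - 1)` is the last Radau node of the previous interval, so `η(t_{m-1}-) = 0`.
  have hjump : (U (t (m - 1)) - Pu m (t (m - 1))) -
      (if m = 1 then 0 else U (t (m - 1)) - Pu (m - 1) (t (m - 1)))
        = U (t (m - 1)) - Pu m (t (m - 1)) := by
    split_ifs with hm
    · exact sub_zero _
    · have hprev := (hPu (m - 1) (by omega) (by omega)).2 (Fin.last q)
      rw [(hGR (m - 1) (by omega) (by omega)).node_last] at hprev
      rw [hprev, sub_self, sub_zero]
  rw [hjump]
  refine ⟨_, h.sum_inner_deriv_add_inner_left_eq M₀ hU hPq hPnode hPhq hPhnode hPhleft hψ,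
    fun α β hα hβ hαβ => ?_⟩
  have hΩa := eval_nodal_not_at_node (s := univ) fun i _ => (h.left_lt_node i).ne
  have hbound := h.abs_two_mul_integral_eval_nodal_mul_inner_le hρ.le
    (M₀ (((nodal univ (node m)).eval (t (m - 1)))⁻¹ • (U (t (m - 1)) - Pu m (t (m - 1)))))
    hψ hα hβ hαβ
  rwa [← map_smul, smul_inv_smul₀ hΩa] at hbound

/-- Lemma `lem:rhs2_1`: with `η = U - PU` (`P` the interpolation at the Gauß–Radau nodes,
its piece on `I_m` being `Pu m`, and `P̂` the degree-`q+1` interpolation additionally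
using the left endpoint `t_{m-1}`, its piece being `Phu m`), for every `m` and every test
polynomial `ψ` of degree `≤ q`:
`Q_{m,ρ}[∂ₜM₀η, ψ] + ⟨M₀[η]_{m-1}^0, ψ(t_{m-1}+)⟩ = Q_{m,ρ}[∂ₜM₀(U - P̂U), ψ] + R(U,ψ)`
with `|R(U,ψ)| ≤ C α τ_m |M₀η(t_{m-1}+)|² + β ⦀ψ⦀²_{Q,ρ,m}` for all `α, β > 0` with
`αβ = 1/4`, where `C ≥ 0` depends only on the final time `T` and on `ρ`. -/
theorem stmt_3 {H : Type*} [NormedAddCommGroup H] [InnerProductSpace ℝ H]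
    (ρ T : ℝ) (hρ : 0 < ρ) (hT : 0 < T) :
    ∃ C : ℝ, 0 ≤ C ∧
      ∀ (M₀ : H →L[ℝ] H), (∀ x y : H, ⟪M₀ x, y⟫ = ⟪x, M₀ y⟫) →
      ∀ (q N : ℕ), 1 ≤ N →
      ∀ (t : ℕ → ℝ), t 0 = 0 → t N = T → (∀ m, m < N → t m < t (m + 1)) →
      ∀ (node wt : ℕ → Fin (q + 1) → ℝ),
        (∀ m, 1 ≤ m → m ≤ N →
          IsGaussRadauOn q (fun s => Real.exp (-2 * ρ * (s - t (m - 1)))) (t (m - 1))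
            (t m) (node m) (wt m)) →
      ∀ (U : ℝ → H), Continuous U → Differentiable ℝ U →
      ∀ (Pu : ℕ → ℝ → H),
        (∀ m, 1 ≤ m → m ≤ N → IsPolyDeg q (Pu m) ∧
          ∀ i, Pu m (node m i) = U (node m i)) →
      ∀ (Phu : ℕ → ℝ → H),
        (∀ m, 1 ≤ m → m ≤ N → IsPolyDeg (q + 1) (Phu m) ∧
          (∀ i, Phu m (node m i) = U (node m i)) ∧ Phu m (t (m - 1)) = U (t (m - 1))) →
      ∀ m, 1 ≤ m → m ≤ N → ∀ ψ : ℝ → H, IsPolyDeg q ψ →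
      ∃ R : ℝ,
        ((∑ i, wt m i *
              ⟪deriv (fun s => M₀ (U s) - M₀ (Pu m s)) (node m i), ψ (node m i)⟫)
            + ⟪M₀ ((U (t (m - 1)) - Pu m (t (m - 1))) -
                (if m = 1 then 0 else U (t (m - 1)) - Pu (m - 1) (t (m - 1)))),
                ψ (t (m - 1))⟫
          = (∑ i, wt m i *
              ⟪deriv (fun s => M₀ (U s) - M₀ (Phu m s)) (node m i), ψ (node m i)⟫) + R) ∧
        ∀ α β : ℝ, 0 < α → 0 < β → α * β = 1 / 4 →
          |R| ≤ C * α * (t m - t (m - 1)) * ‖M₀ (U (t (m - 1)) - Pu m (t (m - 1)))‖ ^ 2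
            + β * (∑ i, wt m i * ⟪ψ (node m i), ψ (node m i)⟫) :=
  stmt_3_general ρ T hρ
end

section
/- Let q ∈ ℕ and w ∈ W. If (ω, r) and (ω′, r′) are both right-sided w-Gauß–Radau quadratures of order q, then (ω, r) = (ω′, r′); i.e., the w-Gauß–Radau quadrature of order q is unique. -/
open MeasureTheory Real

/-- The class `W` of weighting functions: `w ∈ L¹(-1,1)` with `w > 0` almost everywhere. -/
def IsWeight (w : ℝ → ℝ) : Prop :=
  IntegrableOn w (Set.Ioo (-1 : ℝ) 1) ∧
    ∀ᵐ x ∂(volume.restrict (Set.Ioo (-1 : ℝ) 1)), 0 < w x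

/-- A (right-sided) `w`-Gauß–Radau quadrature of order `q`. -/
def IsGaussRadauQuad (q : ℕ) (w : ℝ → ℝ) (ω r : Fin (q + 1) → ℝ) : Prop :=
  (∀ j, r j ∈ Set.Icc (-1 : ℝ) 1) ∧ Monotone r ∧ r (Fin.last q) = 1 ∧
    ∀ p : Polynomial ℝ, p.natDegree ≤ 2 * q →
      ∫ x in Set.Ioo (-1 : ℝ) 1, p.eval x * w x = ∑ j, ω j * p.eval (r j)

/-!
Everything follows from exactness in degree `2q` together with positivity of the weight.
If two nodes coincided, the square of the polynomial vanishing at all other nodes would have a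
positive weighted integral but a vanishing quadrature sum; so the nodes are distinct, and the
squared Lagrange basis polynomials then recover every weight from the nodes.
The monic polynomial `π` whose zeros are the free nodes `r_0, …, r_{q-1}` satisfies
`∫ (1 - x) π p w = 0` for `deg p < q`, because `(1 - x) π p` vanishes at every node, including
`r_q = 1`. A monic polynomial of degree `q` orthogonal to lower degrees for the positive weight
`(1 - x) w(x)` is unique (the difference `D` of two of them has `∫ (1 - x) D² w = 0`), and the
ordered free nodes are the zeros of `π`.
-/

open MeasureTheory Polynomial Finset

namespace IsWeight

variable {w : ℝ → ℝ}

theorem integrable_eval_mul (hw : IsWeight w) (p : ℝ[X]) :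
    IntegrableOn (fun x => p.eval x * w x) (Set.Ioo (-1) 1) := by
  obtain ⟨C, hC⟩ := isCompact_Icc.exists_bound_of_continuousOn
    (f := fun x : ℝ => p.eval x) (s := Set.Icc (-1) 1) p.continuous.continuousOn
  refine hw.1.bdd_mul (c := C) p.continuous.aestronglyMeasurable ?_
  filter_upwards [ae_restrict_mem measurableSet_Ioo] with x hx
  exact hC x (Set.Ioo_subset_Icc_self hx)

theorem integral_eval_mul_pos (hw : IsWeight w) {p : ℝ[X]} (hp : p ≠ 0)
    (hnonneg : ∀ x ∈ Set.Ioo (-1 : ℝ) 1, 0 ≤ p.eval x) :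
    0 < ∫ x in Set.Ioo (-1) 1, p.eval x * w x := by
  set μ := volume.restrict (Set.Ioo (-1 : ℝ) 1)
  have hroots : ∀ᵐ x ∂μ, p.eval x ≠ 0 :=
    ae_restrict_of_ae <| measure_eq_zero_iff_ae_notMem.1 <|
      (finite_setOfPred_isRoot hp).measure_zero volume
  have hinside : ∀ᵐ x ∂μ, x ∈ Set.Ioo (-1 : ℝ) 1 := ae_restrict_mem measurableSet_Ioo
  rw [integral_pos_iff_support_of_nonneg_ae ?nonneg (hw.integrable_eval_mul p)]
  case nonneg =>
    filter_upwards [hinside, hw.2] with x hx hwx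
    exact mul_nonneg (hnonneg x hx) hwx.le
  refine pos_iff_ne_zero.2 fun hzero => ?_
  have hfalse : ∀ᵐ _ ∂μ, False := by
    filter_upwards [measure_eq_zero_iff_ae_notMem.1 hzero, hroots, hw.2] with x hx hpx hwx
    exact hx (mul_ne_zero hpx hwx.ne')
  rw [Filter.eventually_false_iff_eq_bot, ae_eq_bot, Measure.restrict_eq_zero,
    Real.volume_Ioo] at hfalse
  norm_num at hfalse

theorem eq_of_monic_of_orthogonal (hw : IsWeight w) {q : ℕ} {P P' : ℝ[X]}
    (hP : P.Monic) (hP' : P'.Monic) (hdeg : P.natDegree = q) (hdeg' : P'.natDegree = q)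
    (horth : ∀ p : ℝ[X], p.natDegree < q →
      ∫ x in Set.Ioo (-1) 1, ((1 - X) * P * p).eval x * w x = 0)
    (horth' : ∀ p : ℝ[X], p.natDegree < q →
      ∫ x in Set.Ioo (-1) 1, ((1 - X) * P' * p).eval x * w x = 0) :
    P = P' := by
  by_contra hne
  set D := P - P'
  have hD : D ≠ 0 := sub_ne_zero.2 hne
  have hDdeg : D.natDegree < q := by
    have := degree_sub_lt_left (p := P) (q := P')
      (by rw [degree_eq_natDegree hP.ne_zero, degree_eq_natDegree hP'.ne_zero, hdeg, hdeg'])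
      hP.ne_zero (by rw [hP.leadingCoeff, hP'.leadingCoeff])
    rwa [degree_eq_natDegree hP.ne_zero, hdeg, ← natDegree_lt_iff_degree_lt hD] at this
  have hzero : ∫ x in Set.Ioo (-1) 1, ((1 - X) * D ^ 2).eval x * w x = 0 := by
    have hsplit : (1 - X) * D ^ 2 = (1 - X) * P * D - (1 - X) * P' * D := by ring
    calc ∫ x in Set.Ioo (-1) 1, ((1 - X) * D ^ 2).eval x * w x
        = ∫ x in Set.Ioo (-1) 1,
            (((1 - X) * P * D).eval x * w x - ((1 - X) * P' * D).eval x * w x) := by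
          congr 1 with x
          rw [hsplit, eval_sub, sub_mul]
      _ = 0 := by
          rw [integral_sub (hw.integrable_eval_mul _) (hw.integrable_eval_mul _), horth D hDdeg,
            horth' D hDdeg, sub_zero]
  refine (hw.integral_eval_mul_pos ?_ fun x hx => ?_).ne' hzero
  · exact mul_ne_zero (fun h => by simpa using congrArg (eval 0) h) (pow_ne_zero 2 hD)
  · simp only [eval_mul, eval_sub, eval_one, eval_X, eval_pow]
    exact mul_nonneg (sub_nonneg.2 hx.2.le) (sq_nonneg _)

end IsWeight

theorem Lagrange.eval_nodal_eq_zero_iff {ι R : Type*} [CommRing R] [IsDomain R] {s : Finset ι}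
    {v : ι → R} {x : R} : (Lagrange.nodal s v).eval x = 0 ↔ ∃ i ∈ s, v i = x := by
  simp only [Lagrange.eval_nodal, prod_eq_zero_iff, sub_eq_zero, @eq_comm _ x]

theorem StrictMono.eq_of_nodal_eq {ι R : Type*} [Fintype ι] [LinearOrder ι] [WellFoundedLT ι]
    [CommRing R] [IsDomain R] [LinearOrder R] {f g : ι → R} (hf : StrictMono f)
    (hg : StrictMono g) (h : Lagrange.nodal univ f = Lagrange.nodal univ g) : f = g := by
  refine (hf.range_inj hg).1 (Set.ext fun x => ?_)
  have hf' := Lagrange.eval_nodal_eq_zero_iff (s := univ) (v := f) (x := x)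
  have hg' := Lagrange.eval_nodal_eq_zero_iff (s := univ) (v := g) (x := x)
  simp only [mem_univ, true_and] at hf' hg'
  rw [Set.mem_range, Set.mem_range, ← hf', ← hg', h]

namespace IsGaussRadauQuad

variable {q : ℕ} {w : ℝ → ℝ} {ω r : Fin (q + 1) → ℝ}

theorem integral_eq_zero_of_eval_nodes_eq_zero (h : IsGaussRadauQuad q w ω r) {p : ℝ[X]}
    (hp : p.natDegree ≤ 2 * q) (hnodes : ∀ j, p.eval (r j) = 0) :
    ∫ x in Set.Ioo (-1) 1, p.eval x * w x = 0 := by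
  rw [h.2.2.2 p hp]
  exact sum_eq_zero fun j _ => by rw [hnodes j, mul_zero]

theorem injective (hw : IsWeight w) (h : IsGaussRadauQuad q w ω r) : Function.Injective r := by
  intro i j hij
  by_contra hne
  set P := Lagrange.nodal (univ.erase i) r ^ 2
  have hdeg : P.natDegree ≤ 2 * q := by
    simp [P, Lagrange.natDegree_nodal, mul_comm]
  have hnodes : ∀ k, P.eval (r k) = 0 := by
    intro k
    obtain rfl | hk := eq_or_ne k i
    · simp [P, hij, Lagrange.eval_nodal_at_node (mem_erase.2 ⟨Ne.symm hne, mem_univ j⟩)]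
    · simp [P, Lagrange.eval_nodal_at_node (mem_erase.2 ⟨hk, mem_univ k⟩)]
  refine (hw.integral_eval_mul_pos (pow_ne_zero 2 Lagrange.nodal_ne_zero) fun x _ => ?_).ne'
    (h.integral_eq_zero_of_eval_nodes_eq_zero hdeg hnodes)
  simp only [eval_pow]
  positivity

theorem strictMono (hw : IsWeight w) (h : IsGaussRadauQuad q w ω r) : StrictMono r :=
  h.2.1.strictMono_of_injective (h.injective hw)

theorem integral_one_sub_X_mul_nodal_mul_eq_zero (h : IsGaussRadauQuad q w ω r) {p : ℝ[X]}
    (hp : p.natDegree < q) :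
    ∫ x in Set.Ioo (-1) 1,
      ((1 - X) * Lagrange.nodal univ (r ∘ Fin.castSucc) * p).eval x * w x = 0 := by
  refine h.integral_eq_zero_of_eval_nodes_eq_zero ?_ fun j => ?_
  · have h1 : (1 - X : ℝ[X]).natDegree ≤ 1 := (natDegree_sub_le _ _).trans (by simp)
    have hnodal : (Lagrange.nodal univ (r ∘ Fin.castSucc)).natDegree ≤ q := by
      simp [Lagrange.natDegree_nodal]
    exact (natDegree_mul_le_of_le (natDegree_mul_le_of_le h1 hnodal) le_rfl).trans (by omega)
  · induction j using Fin.lastCases with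
    | last => simp [h.2.2.1]
    | cast i =>
      simp only [eval_mul, mul_eq_zero]
      exact .inl (.inr (Lagrange.eval_nodal_at_node (v := r ∘ Fin.castSucc) (mem_univ i)))

theorem weight_eq_integral_basis_sq (hw : IsWeight w) (h : IsGaussRadauQuad q w ω r)
    (i : Fin (q + 1)) :
    ω i = ∫ x in Set.Ioo (-1) 1, (Lagrange.basis univ r i ^ 2).eval x * w x := by
  have hinj : Set.InjOn r (univ : Finset (Fin (q + 1))) := (h.injective hw).injOn
  have hdeg : (Lagrange.basis univ r i ^ 2).natDegree ≤ 2 * q := by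
    simp [Lagrange.natDegree_basis hinj (mem_univ i), mul_comm]
  rw [h.2.2.2 _ hdeg, sum_eq_single i (fun j _ hji => ?_) (by simp)]
  · simp [Lagrange.eval_basis_self hinj (mem_univ i)]
  · simp [Lagrange.eval_basis_of_ne hji.symm (mem_univ j)]

end IsGaussRadauQuad

/-- Proposition `p:uni` (4): the right-sided `w`-Gauß–Radau quadrature of order `q`
is unique. -/
theorem stmt_13 (q : ℕ) (w : ℝ → ℝ) (hw : IsWeight w)
    (ω r ω' r' : Fin (q + 1) → ℝ)
    (h : IsGaussRadauQuad q w ω r) (h' : IsGaussRadauQuad q w ω' r') :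
    ω = ω' ∧ r = r' := by
  have hnodal :
      Lagrange.nodal univ (r ∘ Fin.castSucc) = Lagrange.nodal univ (r' ∘ Fin.castSucc) :=
    hw.eq_of_monic_of_orthogonal Lagrange.nodal_monic Lagrange.nodal_monic
      (by simp [Lagrange.natDegree_nodal]) (by simp [Lagrange.natDegree_nodal])
      (fun _ => h.integral_one_sub_X_mul_nodal_mul_eq_zero)
      (fun _ => h'.integral_one_sub_X_mul_nodal_mul_eq_zero)
  have hfree : r ∘ Fin.castSucc = r' ∘ Fin.castSucc :=
    ((h.strictMono hw).comp Fin.strictMono_castSucc).eq_of_nodal_eq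
      ((h'.strictMono hw).comp Fin.strictMono_castSucc) hnodal
  have hnodes : r = r' := by
    funext j
    induction j using Fin.lastCases with
    | last => rw [h.2.2.1, h'.2.2.1]
    | cast i => exact congrFun hfree i
  subst hnodes
  exact ⟨funext fun i => (h.weight_eq_integral_basis_sq hw i).trans
    (h'.weight_eq_integral_basis_sq hw i).symm, rfl⟩
end
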